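/- Let n ≥ 2 and let λ₁ ≥ λ₂ ≥ ⋯ ≥ λₙ be real numbers satisfying Θ(λ) ≥ (n−2)·π/2. Then for all indices j, ℓ ∈ {1, …, n} one has 1 + λ₁·(λⱼ + λℓ) − λⱼ·λℓ ≥ 0, unless j = ℓ = n and λₙ < 0. -/
import Mathlib


open Real

/-- Lemma in Section 4: if `λ₁ ≥ ⋯ ≥ λₙ` and `Θ(λ) ≥ (n-2)π/2`, then
`1 + λ₁(λⱼ + λℓ) - λⱼλℓ ≥ 0` unless `j = ℓ = n` and `λₙ < 0`. -/
theorem stmt_10 (n : ℕ) (hn : 2 ≤ n) (l : Fin n → ℝ)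
    (hdec : ∀ i j : Fin n, i ≤ j → l j ≤ l i)
    (hΘ : ((n : ℝ) - 2) * (π / 2) ≤ ∑ i, Real.arctan (l i)) :
    ∀ j ℓ : Fin n,
      ¬((j : ℕ) = n - 1 ∧ (ℓ : ℕ) = n - 1 ∧ l ⟨n - 1, by omega⟩ < 0) →
      0 ≤ 1 + l ⟨0, by omega⟩ * (l j + l ℓ) - l j * l ℓ := by
  have key : ∀ i j : Fin n, i ≠ j → 0 ≤ l i + l j := by
    intro i j hij
    have hsub : ({i, j} : Finset (Fin n)) ⊆ Finset.univ := Finset.subset_univ _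
    have hsplit : ∑ k, arctan (l k)
        = (∑ k ∈ Finset.univ \ {i, j}, arctan (l k)) + ∑ k ∈ {i, j}, arctan (l k) :=
      (Finset.sum_sdiff hsub).symm
    have hpair : ∑ k ∈ ({i, j} : Finset (Fin n)), arctan (l k)
        = arctan (l i) + arctan (l j) := Finset.sum_pair hij
    have hcard : (Finset.univ \ ({i, j} : Finset (Fin n))).card = n - 2 := by
      rw [Finset.card_sdiff_of_subset hsub, Finset.card_pair hij, Finset.card_univ, Fintype.card_fin]
    have hbound : ∑ k ∈ Finset.univ \ ({i, j} : Finset (Fin n)), arctan (l k)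
        ≤ ((n : ℝ) - 2) * (π / 2) := by
      calc ∑ k ∈ Finset.univ \ ({i, j} : Finset (Fin n)), arctan (l k)
          ≤ ∑ _k ∈ Finset.univ \ ({i, j} : Finset (Fin n)), (π / 2) :=
            Finset.sum_le_sum fun k _ => (Real.arctan_lt_pi_div_two _).le
        _ = ((n : ℝ) - 2) * (π / 2) := by
            rw [Finset.sum_const, hcard, nsmul_eq_mul]
            congr 1
            have : ((n - 2 : ℕ) : ℝ) = (n : ℝ) - 2 := by
              have : (2 : ℕ) ≤ n := hn
              push_cast [Nat.cast_sub this]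
              ring
            exact this
    have harct : 0 ≤ arctan (l i) + arctan (l j) := by
      rw [hsplit, hpair] at hΘ
      linarith
    by_contra h
    push_neg at h
    have h1 : l i < -(l j) := by linarith
    have h2 : arctan (l i) < arctan (-(l j)) := Real.arctan_strictMono h1
    rw [Real.arctan_neg] at h2
    linarith
  intro j ℓ hne
  set a := l j with ha
  set b := l ℓ with hb
  have h1a : a ≤ l ⟨0, by omega⟩ := hdec ⟨0, by omega⟩ j (by exact Fin.mk_le_of_le_val (Nat.zero_le _))
  have h1b : b ≤ l ⟨0, by omega⟩ := hdec ⟨0, by omega⟩ ℓ (by exact Fin.mk_le_of_le_val (Nat.zero_le _))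
  have hab : 0 ≤ a + b := by
    by_cases hjl : j = ℓ
    · subst hjl
      -- need 0 ≤ l j
      set k : Fin n := ⟨n - 1, by omega⟩ with hk
      by_cases hjk : j = k
      · have : ¬ l k < 0 := by
          intro hneg
          exact hne ⟨by rw [hjk], by rw [hjk], hneg⟩
        push_neg at this
        simp only [ha, hb, hjk]
        linarith
      · have hle : j ≤ k := by
          have hj := j.isLt
          show (j : ℕ) ≤ n - 1
          omega
        have h3 : l k ≤ l j := hdec j k hle
        have h4 : 0 ≤ l j + l k := key j k hjk
        linarith
    · exact key j ℓ hjl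
  nlinarith [sq_nonneg a, sq_nonneg b, mul_nonneg (sub_nonneg.mpr h1a) hab,
    mul_nonneg (sub_nonneg.mpr h1b) hab, sq_nonneg (a + b), sq_nonneg (a - b)]
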